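/- arXiv:1102.4811 — 4 statements merged into one kernel-verified Lean document; each statement's English description precedes it below -/
import Mathlib

section
/- Let μ be a probability measure on ℝ with cumulative distribution function F, and let p_c ∈ (0,1). Define m⁺ = inf{x ∈ ℝ : F(x) ≥ 1 − p_c} and m⁻ = sup{x ∈ ℝ : F(x) ≤ 1 − p_c}, and assume m⁺ = m⁻ =: m and that either F has a jump at m (i.e. F(m) > lim_{h→0⁺} F(m − h)) or F is differentiable at m with F′(m) > 0. Then for every σ > 0, setting τ = σ·m + 1/2, one has 1 − F((τ − 1)/σ) > p_c and 1 − F(τ/σ) < p_c. -/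
/-!
Since the cdf is monotone and crosses the level `1 - p_c`, every point left of `m⁺` lies strictly
below that level and every point right of `m⁻` strictly above it. With `m⁺ = m⁻ = m`, the two
rescaled thresholds `(τ - 1)/σ = m - 1/(2σ)` and `τ/σ = m + 1/(2σ)` fall on opposite sides of `m`.
-/

open MeasureTheory ProbabilityTheory Filter

section LevelSets

variable {α β : Type*} [ConditionallyCompleteLinearOrder α] [LinearOrder β] {f : α → β} {c : β}

theorem Monotone.lt_apply_of_csSup_lt (hf : Monotone f) (hc : ∃ x, c < f x) {y : α}
    (hy : sSup {x | f x ≤ c} < y) : c < f y := by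
  obtain ⟨x₀, hx₀⟩ := hc
  have hbdd : BddAbove {x | f x ≤ c} := ⟨x₀, fun z hz => (hf.reflect_lt (hz.trans_lt hx₀)).le⟩
  by_contra! hyc
  exact (le_csSup hbdd hyc).not_gt hy

theorem Monotone.apply_lt_of_lt_csInf (hf : Monotone f) (hc : ∃ x, f x < c) {y : α}
    (hy : y < sInf {x | c ≤ f x}) : f y < c :=
  hf.dual.lt_apply_of_csSup_lt hc hy

end LevelSets

theorem threshold_choice_general
    (μ : Measure ℝ) [IsProbabilityMeasure μ] (pc : ℝ) (hpc0 : 0 < pc) (hpc1 : pc < 1)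
    (F : ℝ → ℝ) (hF : ∀ x, F x = (μ (Set.Iic x)).toReal)
    (m : ℝ)
    (hplus : sInf {x : ℝ | 1 - pc ≤ F x} = m)
    (hminus : sSup {x : ℝ | F x ≤ 1 - pc} = m) :
    ∀ σ : ℝ, 0 < σ →
      pc < 1 - F ((σ * m + 1/2 - 1) / σ) ∧ 1 - F ((σ * m + 1/2) / σ) < pc := by
  have hFcdf : F = cdf μ := funext fun x => by rw [hF, cdf_eq_real, measureReal_def]
  subst hFcdf
  have hmono : Monotone (cdf μ) := (cdf μ).mono
  have h_above : ∃ x, 1 - pc < cdf μ x :=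
    ((tendsto_cdf_atTop μ).eventually (eventually_gt_nhds (by linarith))).exists
  have h_below : ∃ x, cdf μ x < 1 - pc :=
    ((tendsto_cdf_atBot μ).eventually (eventually_lt_nhds (by linarith))).exists
  intro σ hσ
  have h_left : (σ * m + 1/2 - 1) / σ < m := by rw [div_lt_iff₀ hσ]; linarith
  have h_right : m < (σ * m + 1/2) / σ := by rw [lt_div_iff₀ hσ]; linarith
  constructor
  · linarith [hmono.apply_lt_of_lt_csInf h_below (by rwa [hplus])]
  · linarith [hmono.lt_apply_of_csSup_lt h_above (by rwa [hminus])]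

/-- **Choice of threshold under the non-degeneracy condition.**
Let `μ` be a probability measure on `ℝ` with cdf `F`, and `p_c ∈ (0,1)`.
If `m⁺ = inf {x : F x ≥ 1 − p_c}` and `m⁻ = sup {x : F x ≤ 1 − p_c}` agree, with
common value `m`, and `F` either has a jump at `m` (its left limit at `m` is
strictly below `F m`) or is differentiable at `m` with positive derivative, then
for every `σ > 0`, taking `τ = σ·m + 1/2`, one has
`1 − F((τ−1)/σ) > p_c` and `1 − F(τ/σ) < p_c`. -/
theorem threshold_choice
    (μ : Measure ℝ) [IsProbabilityMeasure μ] (pc : ℝ) (hpc0 : 0 < pc) (hpc1 : pc < 1)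
    (F : ℝ → ℝ) (hF : ∀ x, F x = (μ (Set.Iic x)).toReal)
    (m : ℝ)
    (hplus : sInf {x : ℝ | 1 - pc ≤ F x} = m)
    (hminus : sSup {x : ℝ | F x ≤ 1 - pc} = m)
    (hnondeg : Function.leftLim F m < F m ∨ ∃ d : ℝ, HasDerivAt F d m ∧ 0 < d) :
    ∀ σ : ℝ, 0 < σ →
      pc < 1 - F ((σ * m + 1/2 - 1) / σ) ∧ 1 - F ((σ * m + 1/2) / σ) < pc :=
  threshold_choice_general μ pc hpc0 hpc1 F hF m hplus hminus
end

section
/- Let ι be a finite type and p : ι → ℝ with 0 ≤ p i ≤ 1 for all i, and let μ be the product probability measure on configurations ω : ι → Bool under which the coordinates are independent with μ(ω i = true) = p i. If A and B are measurable increasing events (upper sets for the pointwise order), then μ(A ∩ B) ≥ μ(A) · μ(B). The same inequality holds if A and B are both decreasing events. -/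
open MeasureTheory

noncomputable def bernoulliBool (p : ℝ) : Measure Bool :=
  (PMF.bernoulli (min (Real.toNNReal p) 1) (min_le_right _ _)).toMeasure

instance (p : ℝ) : IsProbabilityMeasure (bernoulliBool p) :=
  PMF.toMeasure.isProbabilityMeasure _

/-- Inhomogeneous Bernoulli site percolation: the product probability measure on
configurations `ω : V → Bool` under which the coordinates are independent and
`ω s = true` with probability `π s` (when `0 ≤ π s ≤ 1`). -/
noncomputable def sitePerc {V : Type*} [Fintype V] (π : V → ℝ) :
    Measure (V → Bool) :=
  Measure.pi fun s => bernoulliBool (π s)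

/-!
A product of measures on linearly ordered factors weights points log-modularly,
`μ {a} * μ {b} = μ {a ⊓ b} * μ {a ⊔ b}`, because coordinatewise `{aᵢ ⊓ bᵢ, aᵢ ⊔ bᵢ} = {aᵢ, bᵢ}`.
On a finite distributive lattice, Mathlib's `fkg` turns log-supermodularity of the point masses
into positive correlation of monotone functions, here the indicators of upper sets.
Lower sets are upper sets of the order dual, where the point masses are still log-supermodular.
-/

theorem IsUpperSet.monotone_indicator_one {α M : Type*} [Preorder α] [Zero M] [One M]
    [Preorder M] [ZeroLEOneClass M] {S : Set α} (hS : IsUpperSet S) :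
    Monotone (S.indicator (1 : α → M)) := by
  intro a b hab
  by_cases ha : a ∈ S
  · simp [ha, hS hab ha]
  · simp [ha, Set.indicator_nonneg]

namespace MeasureTheory

theorem Measure.pi_singleton_mul_pi_singleton {ι : Type*} [Fintype ι] {β : ι → Type*}
    [∀ i, LinearOrder (β i)] [∀ i, MeasurableSpace (β i)] (ν : ∀ i, Measure (β i))
    [∀ i, SigmaFinite (ν i)] (a b : ∀ i, β i) :
    Measure.pi ν {a} * Measure.pi ν {b} = Measure.pi ν {a ⊓ b} * Measure.pi ν {a ⊔ b} := by
  simp only [← Set.univ_pi_singleton, Measure.pi_pi, ← Finset.prod_mul_distrib]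
  refine Finset.prod_congr rfl fun i _ => ?_
  rcases le_total (a i) (b i) with h | h <;> simp [h, mul_comm]

variable {α : Type*} [Fintype α] [MeasurableSpace α] [MeasurableSingletonClass α]

theorem measureReal_eq_sum_mul_indicator (μ : Measure α) [IsFiniteMeasure μ] (A : Set α) :
    μ.real A = ∑ a, μ.real {a} * A.indicator 1 a := by
  rw [← integral_indicator_one (Set.toFinite A).measurableSet, integral_fintype .of_finite]
  rfl

variable [DistribLattice α] {μ : Measure α} [IsFiniteMeasure μ] {A B : Set α}

theorem _root_.IsUpperSet.measure_mul_measure_le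
    (hμ : ∀ a b, μ {a} * μ {b} ≤ μ {a ⊓ b} * μ {a ⊔ b}) (hA : IsUpperSet A) (hB : IsUpperSet B) :
    μ A * μ B ≤ μ Set.univ * μ (A ∩ B) := by
  have hμ_real : ∀ a b, μ.real {a} * μ.real {b} ≤ μ.real {a ⊓ b} * μ.real {a ⊔ b} := fun a b => by
    simpa only [measureReal_def, ← ENNReal.toReal_mul] using
      ENNReal.toReal_mono (by finiteness) (hμ a b)
  have := fkg (A.indicator 1) (B.indicator 1) (fun a => μ.real {a}) (fun _ => measureReal_nonneg)
    (Set.indicator_nonneg fun _ _ => zero_le_one) (Set.indicator_nonneg fun _ _ => zero_le_one)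
    hA.monotone_indicator_one hB.monotone_indicator_one hμ_real
  rw [← ENNReal.toReal_le_toReal (by finiteness) (by finiteness), ENNReal.toReal_mul,
    ENNReal.toReal_mul]
  simp only [← measureReal_def]
  rw [measureReal_eq_sum_mul_indicator μ A, measureReal_eq_sum_mul_indicator μ B,
    measureReal_eq_sum_mul_indicator μ (A ∩ B), ← Finset.coe_univ, ← sum_measureReal_singleton]
  simpa only [Set.inter_indicator_one, Pi.mul_apply] using this

theorem _root_.IsLowerSet.measure_mul_measure_le
    (hμ : ∀ a b, μ {a} * μ {b} ≤ μ {a ⊓ b} * μ {a ⊔ b}) (hA : IsLowerSet A) (hB : IsLowerSet B) :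
    μ A * μ B ≤ μ Set.univ * μ (A ∩ B) := by
  have : MeasurableSingletonClass αᵒᵈ := ‹MeasurableSingletonClass α›
  have : IsFiniteMeasure (α := αᵒᵈ) μ := ‹IsFiniteMeasure μ›
  exact IsUpperSet.measure_mul_measure_le (α := αᵒᵈ) (μ := μ)
    (fun a b => (hμ a b).trans_eq (mul_comm _ _)) hA.toDual hB.toDual

end MeasureTheory

theorem fkg_inequality_general {ι : Type*} [Fintype ι]
    (p : ι → ℝ)
    (A B : Set (ι → Bool))
    (hmono : (IsUpperSet A ∧ IsUpperSet B) ∨ (IsLowerSet A ∧ IsLowerSet B)) :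
    sitePerc p A * sitePerc p B ≤ sitePerc p (A ∩ B) := by
  classical
  have : IsProbabilityMeasure (sitePerc p) := by unfold sitePerc; infer_instance
  have hμ : ∀ a b, sitePerc p {a} * sitePerc p {b} ≤ sitePerc p {a ⊓ b} * sitePerc p {a ⊔ b} :=
    fun a b => (Measure.pi_singleton_mul_pi_singleton _ a b).le
  rw [← one_mul (sitePerc p (A ∩ B)), ← measure_univ (μ := sitePerc p)]
  rcases hmono with ⟨hA, hB⟩ | ⟨hA, hB⟩ <;> exact hA.measure_mul_measure_le hμ hB

/-- **The FKG inequality for Bernoulli product measures.**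
Let `ι` be a finite type, `p : ι → ℝ` with `0 ≤ p i ≤ 1`, and let `μ` be the product
probability measure on `ι → Bool` with independent coordinates and
`μ(ω i = true) = p i`. If `A` and `B` are measurable events which are both increasing
(upper sets for the pointwise order), or both decreasing (lower sets), then
`μ(A ∩ B) ≥ μ(A) · μ(B)`. -/
theorem fkg_inequality {ι : Type*} [Fintype ι]
    (p : ι → ℝ) (hp0 : ∀ i, 0 ≤ p i) (hp1 : ∀ i, p i ≤ 1)
    (A B : Set (ι → Bool)) (hA : MeasurableSet A) (hB : MeasurableSet B)
    (hmono : (IsUpperSet A ∧ IsUpperSet B) ∨ (IsLowerSet A ∧ IsLowerSet B)) :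
    sitePerc p A * sitePerc p B ≤ sitePerc p (A ∩ B) :=
  fkg_inequality_general p A B hmono
end

section
/- Fix p_B ∈ (1/2, 1] and K₀ > 0, and suppose there is D > 0 such that for every n ≥ 1, Bernoulli site percolation with parameter p_B on T^(n) contains a left-right crossing with probability at least 1 − n·exp(−D·n). For each N ≥ 2, let π_N : V_N → [0,1] (V_N the vertex set of T^(N)) be site probabilities and μ_{π_N} the associated inhomogeneous site percolation measure, and suppose there is a square sub-box Q_N ⊆ V_N, a translate of the box {0,…,ρ(N)−1} × {0,…,ρ(N)−1}, with π_N(s) = p_B for all s ∈ Q_N, where ρ(N) ≥ K₀·log N. Then μ_{π_N}({ω : the maximal occupied cluster size T(ω) satisfies T(ω) ≥ K₀·log N}) tends to 1 as N → ∞; equivalently, the type II error β(N) of the maximum cluster test tends to 0. -/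
open MeasureTheory

/-- The subgraph of occupied sites. -/
def occGraph {V : Type*} (G : SimpleGraph V) (ω : V → Bool) : SimpleGraph V where
  Adj u v := G.Adj u v ∧ ω u = true ∧ ω v = true
  symm := ⟨fun _ _ h => ⟨h.1.symm, h.2.2, h.2.1⟩⟩
  loopless := ⟨fun v h => G.loopless.irrefl v h.1⟩

/-- The occupied cluster of a site `s`: all occupied sites joined to `s` by a
path of occupied sites (empty if `s` is not occupied). -/
def cluster {V : Type*} (G : SimpleGraph V) (ω : V → Bool) (s : V) : Set V :=
  {t | ω s = true ∧ ω t = true ∧ (occGraph G ω).Reachable s t}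

/-- The maximal occupied cluster size `T(ω) = max_s |C(s,ω)|`. -/
noncomputable def maxCluster {V : Type*} [Fintype V] (G : SimpleGraph V) (ω : V → Bool) : ℕ :=
  Finset.univ.sup fun s => (cluster G ω s).ncard

/-- The finite triangular lattice `T^(N)`: vertices are the points of the box
`{0,…,N−1} × {0,…,N−1} ⊆ ℤ × ℤ`, two distinct vertices `s`, `t` being adjacent iff
`t − s ∈ {(1,0),(−1,0),(0,1),(0,−1),(1,1),(−1,−1)}`. -/
def triLattice (N : ℕ) : SimpleGraph (Fin N × Fin N) where
  Adj s t := (((t.1 : ℤ) - (s.1 : ℤ), (t.2 : ℤ) - (s.2 : ℤ)) : ℤ × ℤ) ∈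
    ({(1,0), (-1,0), (0,1), (0,-1), (1,1), (-1,-1)} : Set (ℤ × ℤ))
  symm := by
    refine ⟨?_⟩
    intro s t h
    simp only [Set.mem_insert_iff, Set.mem_singleton_iff, Prod.mk.injEq] at h ⊢
    omega
  loopless := by
    refine ⟨?_⟩
    intro s h
    simp only [Set.mem_insert_iff, Set.mem_singleton_iff, Prod.mk.injEq, sub_self] at h
    omega

/-- A left-right crossing of `T^(N)` in a configuration `ω`: a finite sequence of
occupied sites `s₁, …, s_n` such that consecutive sites are adjacent, `s₁` has
first coordinate `0`, and `s_n` has first coordinate `N − 1`. -/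
def HasLeftRightCrossing (N : ℕ) (ω : Fin N × Fin N → Bool) : Prop :=
  ∃ (m : ℕ) (f : Fin (m + 1) → Fin N × Fin N),
    (∀ k, ω (f k) = true) ∧
    (∀ k : Fin m, (triLattice N).Adj (f k.castSucc) (f k.succ)) ∧
    ((f 0).1 : ℕ) = 0 ∧ ((f (Fin.last m)).1 : ℕ) = N - 1

/-! The `ρ(N) × ρ(N)` box on which `π_N ≡ p_B` is a copy of `T^(ρ(N))` inside `T^(N)`, and the
restriction of `μ_{π_N}` to it is Bernoulli(`p_B`) percolation on that copy. A left-right crossing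
of the box is an occupied path meeting all `ρ(N)` columns, so it lies in a single cluster of size
at least `ρ(N) ≥ K₀ log N`. Hence `μ_{π_N}(T ≥ K₀ log N) ≥ 1 − ρ(N) e^{−D ρ(N)}`, which tends to
`1` because `ρ(N) → ∞`. -/

open Filter Topology

namespace MeasureTheory.Measure

variable {ι κ α : Type*} [Fintype ι] [Fintype κ] [MeasurableSpace α]

theorem pi_map_comp_of_injective (μ : ι → Measure α) [∀ i, IsProbabilityMeasure (μ i)]
    {e : κ → ι} (he : Function.Injective e) :
    (Measure.pi μ).map (fun ω => ω ∘ e) = Measure.pi (fun k => μ (e k)) := by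
  classical
  refine (pi_eq fun s hs => ?_).symm
  set t : ι → Set α := Function.extend e s fun _ => Set.univ
  have hpre : (fun ω : ι → α => ω ∘ e) ⁻¹' Set.univ.pi s = Set.univ.pi t := by
    ext ω
    simp only [Set.mem_preimage, Set.mem_univ_pi, Function.comp_apply]
    refine ⟨fun h i => ?_, fun h k => by simpa [t, he.extend_apply] using h (e k)⟩
    by_cases hi : ∃ k, e k = i
    · obtain ⟨k, rfl⟩ := hi
      simpa [t, he.extend_apply] using h k
    · simp [t, Function.extend_apply' _ _ _ hi]
  have hmeas : Measurable fun ω : ι → α => ω ∘ e :=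
    measurable_pi_lambda _ fun k => measurable_pi_apply (e k)
  rw [map_apply hmeas (.univ_pi hs), hpre, pi_pi]
  refine (Fintype.prod_of_injective e he _ _ (fun i hi => ?_) fun k => ?_).symm
  · simp [t, Function.extend_apply' _ _ _ hi]
  · simp [t, he.extend_apply]

end MeasureTheory.Measure

instance {V : Type*} [Fintype V] (π : V → ℝ) : IsProbabilityMeasure (sitePerc π) := by
  unfold sitePerc; infer_instance

theorem sitePerc_map_comp {V W : Type*} [Fintype V] [Fintype W] (π : V → ℝ)
    {e : W → V} (he : Function.Injective e) :
    (sitePerc π).map (fun ω => ω ∘ e) = sitePerc (π ∘ e) :=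
  Measure.pi_map_comp_of_injective _ he

section Clusters

variable {V W : Type*}

theorem ncard_cluster_le_maxCluster [Fintype V] (G : SimpleGraph V) (ω : V → Bool) (s : V) :
    (cluster G ω s).ncard ≤ maxCluster G ω :=
  Finset.le_sup (f := fun s => (cluster G ω s).ncard) (Finset.mem_univ s)

def occGraphHom {G : SimpleGraph W} {H : SimpleGraph V} (φ : G →g H) (ω : V → Bool) :
    occGraph G (ω ∘ φ) →g occGraph H ω where
  toFun := φ
  map_rel' h := ⟨φ.map_rel h.1, h.2.1, h.2.2⟩

theorem image_cluster_comp_subset {G : SimpleGraph W} {H : SimpleGraph V} (φ : G →g H)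
    (ω : V → Bool) (s : W) : φ '' cluster G (ω ∘ φ) s ⊆ cluster H ω (φ s) := by
  rintro _ ⟨t, ⟨hs, ht, hst⟩, rfl⟩
  exact ⟨hs, ht, hst.map (occGraphHom φ ω)⟩

theorem maxCluster_comp_le [Fintype V] [Fintype W] {G : SimpleGraph W} {H : SimpleGraph V}
    (φ : G ↪g H) (ω : V → Bool) : maxCluster G (ω ∘ φ) ≤ maxCluster H ω :=
  Finset.sup_le fun s _ => calc
    (cluster G (ω ∘ φ) s).ncard = (φ '' cluster G (ω ∘ φ) s).ncard :=
      (Set.ncard_image_of_injective _ φ.injective).symm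
    _ ≤ (cluster H ω (φ s)).ncard :=
      Set.ncard_le_ncard (image_cluster_comp_subset φ.toHom ω s) (Set.toFinite _)
    _ ≤ maxCluster H ω := ncard_cluster_le_maxCluster H ω (φ s)

end Clusters

def boxEmbedding {n N : ℕ} (a b : ℕ) (ha : a + n ≤ N) (hb : b + n ≤ N) :
    triLattice n ↪g triLattice N where
  toFun s := (⟨a + s.1, by omega⟩, ⟨b + s.2, by omega⟩)
  inj' s t h := by
    simp only [Prod.mk.injEq, Fin.mk.injEq, Nat.add_left_cancel_iff] at h
    exact Prod.ext (Fin.ext h.1) (Fin.ext h.2)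
  map_rel_iff' {s t} := by
    change ((((a + t.1 : ℕ) : ℤ) - (a + s.1 : ℕ), ((b + t.2 : ℕ) : ℤ) - (b + s.2 : ℕ)) ∈ _) ↔ _
    push_cast
    simp only [add_sub_add_left_eq_sub]
    rfl

theorem triLattice_adj_fst_le {N : ℕ} {s t : Fin N × Fin N} (h : (triLattice N).Adj s t) :
    (t.1 : ℤ) ≤ s.1 + 1 := by
  simp only [triLattice, Set.mem_insert_iff, Set.mem_singleton_iff, Prod.mk.injEq] at h
  omega

theorem Fin.exists_eq_of_succ_le_add_one {m : ℕ} (g : Fin (m + 1) → ℤ)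
    (hg : ∀ k : Fin m, g k.succ ≤ g k.castSucc + 1) {v : ℤ} (h0 : g 0 ≤ v) (k : Fin (m + 1))
    (hk : v ≤ g k) : ∃ i, g i = v := by
  induction k using Fin.induction with
  | zero => exact ⟨0, le_antisymm h0 hk⟩
  | succ k ih =>
    rcases hk.eq_or_lt with hk | hk
    · exact ⟨k.succ, hk.symm⟩
    · exact ih (by linarith [hg k])

theorem le_maxCluster_of_hasLeftRightCrossing {n : ℕ} {σ : Fin n × Fin n → Bool}
    (h : HasLeftRightCrossing n σ) : n ≤ maxCluster (triLattice n) σ := by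
  obtain ⟨m, f, hocc, hadj, h0, hlast⟩ := h
  set C := cluster (triLattice n) σ (f 0)
  have hmem : ∀ k, f k ∈ C := by
    intro k
    refine ⟨hocc 0, hocc k, ?_⟩
    induction k using Fin.induction with
    | zero => rfl
    | succ k ih => exact ih.trans (SimpleGraph.Adj.reachable ⟨hadj k, hocc _, hocc _⟩)
  have hcol : ∀ j : Fin n, ∃ k, (f k).1 = j := by
    intro j
    obtain ⟨k, hk⟩ := Fin.exists_eq_of_succ_le_add_one (fun k => ((f k).1 : ℤ))
      (fun k => triLattice_adj_fst_le (hadj k)) (v := j) (by simp [h0]) (Fin.last m)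
      (by simp only [hlast]; omega)
    exact ⟨k, Fin.ext (by exact_mod_cast hk)⟩
  calc n = (Set.univ : Set (Fin n)).ncard := by simp
    _ ≤ (Prod.fst '' C).ncard := Set.ncard_le_ncard
        (fun j _ => (hcol j).elim fun k hk => ⟨f k, hmem k, hk⟩) (Set.toFinite _)
    _ ≤ C.ncard := Set.ncard_image_le (Set.toFinite _)
    _ ≤ maxCluster (triLattice n) σ := ncard_cluster_le_maxCluster _ σ (f 0)

theorem sitePerc_hasLeftRightCrossing_le {n N : ℕ} (φ : triLattice n ↪g triLattice N)
    (π : Fin N × Fin N → ℝ) (p : ℝ) (hπ : ∀ s, π (φ s) = p) :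
    sitePerc (fun _ => p) {σ | HasLeftRightCrossing n σ} ≤
      sitePerc π {ω | n ≤ maxCluster (triLattice N) ω} := by
  have hπφ : π ∘ φ = fun _ => p := funext hπ
  rw [← hπφ, ← sitePerc_map_comp π φ.injective,
    Measure.map_apply (by fun_prop) (Set.toFinite _).measurableSet]
  exact measure_mono fun ω hω =>
    (le_maxCluster_of_hasLeftRightCrossing hω).trans (maxCluster_comp_le φ ω)

theorem tendsto_one_sub_mul_exp_neg_mul {ι : Type*} {l : Filter ι} {f : ι → ℝ} {D : ℝ}
    (hD : 0 < D) (hf : Tendsto f l atTop) :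
    Tendsto (fun i => 1 - f i * Real.exp (-(D * f i))) l (𝓝 1) := by
  have h := (tendsto_rpow_mul_exp_neg_mul_atTop_nhds_zero 1 D hD).comp hf
  simpa [Function.comp_def, neg_mul] using h.const_sub 1

theorem type_two_error_tendsto_zero_general
    (pB : ℝ)
    (K₀ : ℝ) (hK₀ : 0 < K₀)
    (D : ℝ) (hD : 0 < D)
    (hcross : ∀ n : ℕ, 1 ≤ n →
      ENNReal.ofReal (1 - n * Real.exp (-(D * n))) ≤
        sitePerc (fun _ : Fin n × Fin n => pB) {ω | HasLeftRightCrossing n ω})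
    (π : (N : ℕ) → Fin N × Fin N → ℝ)
    (ρ : ℕ → ℕ)
    (hρ : ∀ N : ℕ, 2 ≤ N → K₀ * Real.log N ≤ (ρ N : ℝ))
    (hQ : ∀ N : ℕ, 2 ≤ N → ∃ a b : ℕ, a + ρ N ≤ N ∧ b + ρ N ≤ N ∧
      ∀ s : Fin N × Fin N, a ≤ (s.1 : ℕ) → (s.1 : ℕ) < a + ρ N →
        b ≤ (s.2 : ℕ) → (s.2 : ℕ) < b + ρ N → π N s = pB) :
    Filter.Tendsto (fun N : ℕ =>
        (sitePerc (π N)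
          {ω | K₀ * Real.log N ≤ (maxCluster (triLattice N) ω : ℝ)}).toReal)
      Filter.atTop (nhds 1) := by
  have hρ_top : Tendsto (fun N => (ρ N : ℝ)) atTop atTop :=
    tendsto_atTop_mono' _ ((eventually_ge_atTop 2).mono hρ)
      ((Real.tendsto_log_atTop.comp tendsto_natCast_atTop_atTop).const_mul_atTop hK₀)
  have hlower : ∀ N, 2 ≤ N → 1 - ρ N * Real.exp (-(D * ρ N)) ≤
      (sitePerc (π N) {ω | K₀ * Real.log N ≤ (maxCluster (triLattice N) ω : ℝ)}).toReal := by
    intro N hN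
    obtain ⟨a, b, ha, hb, hbox⟩ := hQ N hN
    have hρ_pos : (0 : ℝ) < ρ N :=
      (mul_pos hK₀ (Real.log_pos (by exact_mod_cast hN))).trans_le (hρ N hN)
    rw [← ENNReal.ofReal_le_iff_le_toReal (measure_ne_top _ _)]
    refine (hcross (ρ N) (by exact_mod_cast hρ_pos)).trans <|
      (sitePerc_hasLeftRightCrossing_le (boxEmbedding a b ha hb) (π N) pB fun s => ?_).trans <|
      measure_mono fun ω hω => (hρ N hN).trans (by exact_mod_cast hω)
    exact hbox _ (Nat.le_add_right _ _) (Nat.add_lt_add_left s.1.isLt a) (Nat.le_add_right _ _)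
      (Nat.add_lt_add_left s.2.isLt b)
  exact tendsto_of_tendsto_of_tendsto_of_le_of_le' (tendsto_one_sub_mul_exp_neg_mul hD hρ_top)
    tendsto_const_nhds ((eventually_ge_atTop 2).mono hlower)
    (.of_forall fun _ => measureReal_le_one)

/-- **Type II error consistency of the maximum cluster test (Theorem 3 (ii)).**
Fix `p_B ∈ (1/2, 1]` and `K₀ > 0`, and suppose there is `D > 0` such that for every
`n ≥ 1`, Bernoulli site percolation with parameter `p_B` on `T^(n)` contains a
left-right crossing with probability at least `1 − n·exp(−D·n)`. For each `N ≥ 2`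
let `π_N : V_N → [0,1]` be site probabilities on `T^(N)` and suppose there is a
square sub-box `Q_N ⊆ V_N`, a translate of `{0,…,ρ(N)−1} × {0,…,ρ(N)−1}`, with
`π_N ≡ p_B` on `Q_N`, where `ρ(N) ≥ K₀·log N`. Then
`μ_{π_N}(T ≥ K₀·log N) → 1` as `N → ∞`, i.e. the type II error
`β(N)` of the maximum cluster test tends to `0`. -/
theorem type_two_error_tendsto_zero
    (pB : ℝ) (hpB : 1/2 < pB) (hpB1 : pB ≤ 1)
    (K₀ : ℝ) (hK₀ : 0 < K₀)
    (D : ℝ) (hD : 0 < D)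
    (hcross : ∀ n : ℕ, 1 ≤ n →
      ENNReal.ofReal (1 - n * Real.exp (-(D * n))) ≤
        sitePerc (fun _ : Fin n × Fin n => pB) {ω | HasLeftRightCrossing n ω})
    (π : (N : ℕ) → Fin N × Fin N → ℝ)
    (hπ0 : ∀ N s, 0 ≤ π N s) (hπ1 : ∀ N s, π N s ≤ 1)
    (ρ : ℕ → ℕ)
    (hρ : ∀ N : ℕ, 2 ≤ N → K₀ * Real.log N ≤ (ρ N : ℝ))
    (hQ : ∀ N : ℕ, 2 ≤ N → ∃ a b : ℕ, a + ρ N ≤ N ∧ b + ρ N ≤ N ∧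
      ∀ s : Fin N × Fin N, a ≤ (s.1 : ℕ) → (s.1 : ℕ) < a + ρ N →
        b ≤ (s.2 : ℕ) → (s.2 : ℕ) < b + ρ N → π N s = pB) :
    Filter.Tendsto (fun N : ℕ =>
        (sitePerc (π N)
          {ω | K₀ * Real.log N ≤ (maxCluster (triLattice N) ω : ℝ)}).toReal)
      Filter.atTop (nhds 1) :=
  type_two_error_tendsto_zero_general pB K₀ hK₀ D hD hcross π ρ hρ hQ
end

section
/- Fix p ∈ [0,1], λ > 0 and C > 0 with C·λ > 1, and set φ(N) = 2C·log N. Suppose that for every N ≥ 1, every site s of the finite triangular lattice T^(N), and every n ≥ 1, Bernoulli site percolation μ_{p,N} with parameter p on T^(N) satisfies μ_{p,N}({ω : |C(s,ω)| ≥ n}) ≤ exp(−λ·n). Then there exist C₂ > 0 and N₀ such that for all N ≥ N₀, the type I error α(N) = μ_{p,N}({ω : T(ω) ≥ φ(N)}) satisfies α(N) ≤ exp(−C₂·φ(N)). -/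
open MeasureTheory

/- The event `T(ω) ≥ φ(N)` is the union over the N² sites `s` of the events
`|C(s,ω)| ≥ ⌈φ(N)⌉`, so the union bound and the tail hypothesis give
`α(N) ≤ N² · exp(−λ⌈φ(N)⌉)`. Since `N² = exp(φ(N)/C)`, this is at most
`exp(−(λ − 1/C)·φ(N))`, and `λ − 1/C > 0` because `Cλ > 1`. -/

open Real

section UnionBound

variable {V : Type*} [Fintype V] (G : SimpleGraph V)

theorem setOf_le_maxCluster_subset_iUnion {n : ℕ} (hn : 0 < n) :
    {ω : V → Bool | n ≤ maxCluster G ω} ⊆ ⋃ s, {ω | n ≤ (cluster G ω s).ncard} := by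
  intro ω hω
  obtain ⟨s, -, hs⟩ := (Finset.le_sup_iff hn).1 hω
  exact Set.mem_iUnion.2 ⟨s, hs⟩

theorem measure_le_maxCluster_le_card_mul (μ : Measure (V → Bool)) {n : ℕ} (hn : 0 < n)
    {ε : ENNReal} (htail : ∀ s, μ {ω | n ≤ (cluster G ω s).ncard} ≤ ε) :
    μ {ω | n ≤ maxCluster G ω} ≤ Fintype.card V * ε :=
  calc μ {ω | n ≤ maxCluster G ω}
      ≤ ∑ s, μ {ω | n ≤ (cluster G ω s).ncard} :=
        (measure_mono (setOf_le_maxCluster_subset_iUnion G hn)).trans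
          (measure_iUnion_fintype_le _ _)
    _ ≤ ∑ _ : V, ε := Finset.sum_le_sum fun s _ => htail s
    _ = Fintype.card V * ε := by
        rw [Finset.sum_const, Finset.card_univ, nsmul_eq_mul]

end UnionBound

theorem natCast_mul_self_mul_exp_le {N : ℕ} (hN : 0 < N) {lam C x : ℝ} (hlam : 0 ≤ lam)
    (hC : 0 < C) (hx : 2 * C * log N ≤ x) :
    ((N * N : ℕ) : ℝ) * exp (-(lam * x)) ≤ exp (-((lam - 1 / C) * (2 * C * log N))) := by
  have hcard : ((N * N : ℕ) : ℝ) = exp (2 * log N) := by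
    rw [Nat.cast_mul, two_mul, exp_add, exp_log (by exact_mod_cast hN)]
  have hrate : -((lam - 1 / C) * (2 * C * log N)) = 2 * log N - lam * (2 * C * log N) := by
    field_simp
    ring
  rw [hcard, ← exp_add, hrate, exp_le_exp]
  nlinarith [mul_le_mul_of_nonneg_left hx hlam]

theorem type_one_error_exponential_rate_general
    (p : ℝ)
    (lam C : ℝ) (hlam : 0 < lam) (hC : 0 < C) (hClam : 1 < C * lam)
    (φ : ℕ → ℝ) (hφ : ∀ N : ℕ, φ N = 2 * C * Real.log N)
    (htail : ∀ N : ℕ, 1 ≤ N → ∀ s : Fin N × Fin N, ∀ n : ℕ, 1 ≤ n →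
      sitePerc (fun _ : Fin N × Fin N => p)
          {ω | n ≤ (cluster (triLattice N) ω s).ncard} ≤
        ENNReal.ofReal (Real.exp (-(lam * n)))) :
    ∃ C₂ : ℝ, 0 < C₂ ∧ ∃ N₀ : ℕ, ∀ N : ℕ, N₀ ≤ N →
      sitePerc (fun _ : Fin N × Fin N => p)
          {ω | φ N ≤ (maxCluster (triLattice N) ω : ℝ)} ≤
        ENNReal.ofReal (Real.exp (-(C₂ * φ N))) := by
  refine ⟨lam - 1 / C, by rw [sub_pos, div_lt_iff₀ hC]; linarith, 2, fun N hN => ?_⟩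
  have hφpos : 0 < φ N := by
    rw [hφ]
    have : (2 : ℝ) ≤ N := by exact_mod_cast hN
    have := log_pos (by linarith : (1 : ℝ) < N)
    positivity
  have hn : 0 < ⌈φ N⌉₊ := Nat.ceil_pos.2 hφpos
  calc sitePerc (fun _ : Fin N × Fin N => p) {ω | φ N ≤ (maxCluster (triLattice N) ω : ℝ)}
      = sitePerc (fun _ : Fin N × Fin N => p)
          {ω | ⌈φ N⌉₊ ≤ maxCluster (triLattice N) ω} := by
        simp only [Nat.ceil_le]
    _ ≤ ((N * N : ℕ) : ENNReal) * ENNReal.ofReal (exp (-(lam * ⌈φ N⌉₊))) := by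
        simpa using
          measure_le_maxCluster_le_card_mul (triLattice N) _ hn (htail N (by omega) · _ hn)
    _ ≤ ENNReal.ofReal (exp (-((lam - 1 / C) * φ N))) := by
        rw [← ENNReal.ofReal_natCast, ← ENNReal.ofReal_mul (by positivity)]
        refine ENNReal.ofReal_le_ofReal ?_
        rw [hφ]
        exact natCast_mul_self_mul_exp_le (by omega) hlam.le hC (Nat.le_ceil _)

/-- **Exponential rate for the type I error (Theorem 10 (1)).**
Fix `p ∈ [0,1]`, `λ > 0`, `C > 0` with `C·λ > 1`, and set `φ(N) = 2C·log N`. If for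
every `N ≥ 1`, every site `s` of `T^(N)` and every `n ≥ 1`, Bernoulli site
percolation with parameter `p` on `T^(N)` satisfies `μ(|C(s)| ≥ n) ≤ exp(−λ n)`,
then there are `C₂ > 0` and `N₀` such that for all `N ≥ N₀`, the type I error
`α(N) = μ_{p,N}(T ≥ φ(N))` satisfies `α(N) ≤ exp(−C₂·φ(N))`. -/
theorem type_one_error_exponential_rate
    (p : ℝ) (hp0 : 0 ≤ p) (hp1 : p ≤ 1)
    (lam C : ℝ) (hlam : 0 < lam) (hC : 0 < C) (hClam : 1 < C * lam)
    (φ : ℕ → ℝ) (hφ : ∀ N : ℕ, φ N = 2 * C * Real.log N)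
    (htail : ∀ N : ℕ, 1 ≤ N → ∀ s : Fin N × Fin N, ∀ n : ℕ, 1 ≤ n →
      sitePerc (fun _ : Fin N × Fin N => p)
          {ω | n ≤ (cluster (triLattice N) ω s).ncard} ≤
        ENNReal.ofReal (Real.exp (-(lam * n)))) :
    ∃ C₂ : ℝ, 0 < C₂ ∧ ∃ N₀ : ℕ, ∀ N : ℕ, N₀ ≤ N →
      sitePerc (fun _ : Fin N × Fin N => p)
          {ω | φ N ≤ (maxCluster (triLattice N) ω : ℝ)} ≤
        ENNReal.ofReal (Real.exp (-(C₂ * φ N))) :=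
  type_one_error_exponential_rate_general p lam C hlam hC hClam φ hφ htail
end
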